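/- For any w ∈ C ∩ B̄_β, the Mordukhovich (limiting) normal cone satisfies N(w, C ∩ B̄_β) = { y ∈ ℝ^d : there exists X ∈ Y such that for all i ∈ X and all j ∈ {1,…,d_i}, y^i_j ≥ 0 if w^i_j = β, y^i_j = 0 if |w^i_j| < β, and y^i_j ≤ 0 if w^i_j = −β }. -/

import Mathlib

open MeasureTheory Filter
open scoped Classical BigOperators

noncomputable section

/-- The closed `l∞`-ball of radius `r` centered at `0` in `ℝ^d`. -/
def Binf (d : ℕ) (r : ℝ) : Set (EuclideanSpace ℝ (Fin d)) := {z | ∀ i, |z i| ≤ r}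

/-- The weighted group `l0`-norm constraint set
`C := {w : Σ_i p_i · 1_{w^i ≠ 0}(w) ≤ m}`, where the partition of coordinates into `n` blocks
is encoded by `blk : Fin d → Fin n` (coordinate `j` belongs to block `blk j`). -/
def groupC (d n : ℕ) (blk : Fin d → Fin n) (p : Fin n → ℝ) (m : ℝ) :
    Set (EuclideanSpace ℝ (Fin d)) :=
  {w | (∑ i : Fin n, if ∃ j, blk j = i ∧ w j ≠ 0 then p i else 0) ≤ m}

/-- The Fréchet normal cone of `S` at `w`:
`N̂(w,S) = {y : limsup_{x → w, x ∈ S, x ≠ w} ⟨y, x−w⟩/‖x−w‖₂ ≤ 0}`, expressed in ε-δ form. -/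
def frechetNormalCone {d : ℕ} (S : Set (EuclideanSpace ℝ (Fin d)))
    (w : EuclideanSpace ℝ (Fin d)) : Set (EuclideanSpace ℝ (Fin d)) :=
  {y | ∀ ε > (0 : ℝ), ∃ δ > (0 : ℝ), ∀ x ∈ S, x ≠ w → ‖x - w‖ < δ →
    (inner ℝ y (x - w) : ℝ) ≤ ε * ‖x - w‖}

/-- The set of block indices whose block of `w` is nonzero: `I(w) := {i : w^i ≠ 0}`. -/
def blkSupport {d n : ℕ} (blk : Fin d → Fin n) (w : EuclideanSpace ℝ (Fin d)) :
    Set (Fin n) := {i | ∃ j, blk j = i ∧ w j ≠ 0}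

/-- The aggregate penalty `Σ_{i ∈ I(w)} p_i` of the nonzero blocks of `w`. -/
def suppPenalty {d n : ℕ} (blk : Fin d → Fin n) (p : Fin n → ℝ)
    (w : EuclideanSpace ℝ (Fin d)) : ℝ :=
  ∑ i : Fin n, if i ∈ blkSupport blk w then p i else 0

/-- `J(w) := {j ∉ I(w) : Σ_{i ∈ I(w)} p_i + p_j ≤ m}`, the blocks of `w` that are zero but are
not constrained to be. -/
def blkFree {d n : ℕ} (blk : Fin d → Fin n) (p : Fin n → ℝ) (m : ℝ)
    (w : EuclideanSpace ℝ (Fin d)) : Set (Fin n) :=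
  {i | i ∉ blkSupport blk w ∧ suppPenalty blk p w + p i ≤ m}

/-- The Mordukhovich (limiting) normal cone of `S` at `w`: the set of limits `y` of sequences
`y_k ∈ N̂(x_k, S)` with `x_k ∈ S`, `x_k → w`. -/
def mordNormalCone {d : ℕ} (S : Set (EuclideanSpace ℝ (Fin d)))
    (w : EuclideanSpace ℝ (Fin d)) : Set (EuclideanSpace ℝ (Fin d)) :=
  {y | ∃ (x : ℕ → EuclideanSpace ℝ (Fin d)) (yk : ℕ → EuclideanSpace ℝ (Fin d)),
    (∀ k, x k ∈ S) ∧ Filter.Tendsto x Filter.atTop (nhds w) ∧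
    Filter.Tendsto yk Filter.atTop (nhds y) ∧ ∀ k, yk k ∈ frechetNormalCone S (x k)}


/-!
Fix `X ∈ Y(x)` and let `F_X ⊆ B̄_β` be the face on which all blocks outside `X` vanish. It is a
convex subset of `C ∩ B̄_β` through `x`, so every Fréchet normal at `x` is normal to `F_X`, and
normality to `F_X` is the coordinatewise sign condition. If moreover `I(x) = X`, then near `x`
every point of `C ∩ B̄_β` has support containing `X`, hence equal to `X` by maximality: locally
`C ∩ B̄_β = F_X`, and the normals of `F_X` are Fréchet normals. A limiting normal at `w` comes
with some `X` that lies in `Y(x_k)` for infinitely many `k`; along those `k` normality to `F_X`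
passes to the limit, and `X ∈ Y(w)` because `I(w) ⊆ I(x_k)` eventually. Conversely, for
`X ∈ Y(w)`, filling the zero coordinates of `w` in the blocks of `X` with small `t > 0` gives
points `x_t → w` with `I(x_t) = X` at which the given `y` is still normal to `F_X`.
-/

open Topology
open scoped InnerProductSpace

section FrechetNormalCone

variable {d : ℕ} {S T : Set (EuclideanSpace ℝ (Fin d))} {x y : EuclideanSpace ℝ (Fin d)}

lemma mem_frechetNormalCone_of_eventually_inner_sub_nonpos
    (h : ∀ᶠ z in 𝓝 x, z ∈ S → ⟪y, z - x⟫_ℝ ≤ 0) : y ∈ frechetNormalCone S x := by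
  intro ε hε
  obtain ⟨δ, hδ, hball⟩ := Metric.eventually_nhds_iff.1 h
  refine ⟨δ, hδ, fun z hz _ hzx => (hball (by rwa [dist_eq_norm]) hz).trans ?_⟩
  positivity

/-- Moving from `x` towards `z` by a small step `s` inside `T` gives
`s ⟪y, z - x⟫ ≤ ε s ‖z - x‖`, for every `ε > 0`. -/
lemma inner_sub_nonpos_of_mem_frechetNormalCone (hT : Convex ℝ T) (hTS : T ⊆ S) (hx : x ∈ T)
    (hy : y ∈ frechetNormalCone S x) {z : EuclideanSpace ℝ (Fin d)} (hz : z ∈ T) :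
    ⟪y, z - x⟫_ℝ ≤ 0 := by
  rcases eq_or_ne z x with rfl | hne
  · simp
  have hzx : 0 < ‖z - x‖ := norm_pos_iff.2 (sub_ne_zero.2 hne)
  refine le_of_forall_pos_le_add fun ε hε => ?_
  obtain ⟨δ, hδ, hfr⟩ := hy (ε / ‖z - x‖) (by positivity)
  set s := min 1 (δ / (2 * ‖z - x‖))
  have hs : 0 < s := lt_min one_pos (by positivity)
  have hsδ : s * ‖z - x‖ < δ :=
    calc s * ‖z - x‖ ≤ δ / (2 * ‖z - x‖) * ‖z - x‖ := by gcongr; exact min_le_right _ _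
      _ = δ / 2 := by field_simp
      _ < δ := half_lt_self hδ
  have hstep := hfr _ (hTS (hT.add_smul_sub_mem hx hz ⟨hs.le, min_le_left _ _⟩))
    (by simpa using ⟨hs.ne', sub_ne_zero.2 hne⟩)
    (by simpa [norm_smul, abs_of_pos hs] using hsδ)
  simp only [add_sub_cancel_left, inner_smul_right, norm_smul, Real.norm_of_nonneg hs.le] at hstep
  have hscaled : s * ⟪y, z - x⟫_ℝ ≤ s * ε :=
    calc s * ⟪y, z - x⟫_ℝ ≤ ε / ‖z - x‖ * (s * ‖z - x‖) := hstep
      _ = s * ε := by field_simp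
  simpa using le_of_mul_le_mul_left hscaled hs

end FrechetNormalCone

lemma forall_inner_sub_nonpos_of_tendsto {E ι : Type*} [NormedAddCommGroup E]
    [InnerProductSpace ℝ E] {l : Filter ι} [l.NeBot] {T : Set E} {x y : E} {xs ys : ι → E}
    (hx : Tendsto xs l (𝓝 x)) (hy : Tendsto ys l (𝓝 y))
    (h : ∀ᶠ k in l, ∀ z ∈ T, ⟪ys k, z - xs k⟫_ℝ ≤ 0) : ∀ z ∈ T, ⟪y, z - x⟫_ℝ ≤ 0 :=
  fun z hz => le_of_tendsto (hy.inner (tendsto_const_nhds.sub hx)) (h.mono fun _ hk => hk z hz)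

lemma forall_mul_sub_nonpos_iff {β a c : ℝ} (hβ : 0 < β) (ha : a ∈ Set.Icc (-β) β) :
    (∀ b ∈ Set.Icc (-β) β, c * (b - a) ≤ 0) ↔
      (a = β → 0 ≤ c) ∧ (|a| < β → c = 0) ∧ (a = -β → c ≤ 0) := by
  constructor
  · intro h
    have hup := h β ⟨by linarith, le_rfl⟩
    have hdown := h (-β) ⟨le_rfl, by linarith⟩
    refine ⟨?_, fun hlt => ?_, ?_⟩
    · rintro rfl
      nlinarith
    · rw [abs_lt] at hlt
      exact le_antisymm (by nlinarith) (by nlinarith)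
    · rintro rfl
      nlinarith
  · rintro ⟨hc_up, hc_int, hc_down⟩ b ⟨hb₁, hb₂⟩
    rcases ha.2.eq_or_lt with rfl | ha₂
    · nlinarith [hc_up rfl]
    rcases ha.1.eq_or_lt with rfl | ha₁
    · nlinarith [hc_down rfl]
    simp [hc_int (abs_lt.2 ⟨ha₁, ha₂⟩)]

section Blocks

variable {d n : ℕ} {blk : Fin d → Fin n} {p : Fin n → ℝ} {m β : ℝ}
  {w x y : EuclideanSpace ℝ (Fin d)} {X : Finset (Fin n)}

/-- The family `Y` of the paper, for the point `w`. -/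
def maximalBlockSets (blk : Fin d → Fin n) (p : Fin n → ℝ) (m : ℝ)
    (w : EuclideanSpace ℝ (Fin d)) : Set (Finset (Fin n)) :=
  {X | (∀ i ∈ blkSupport blk w, i ∈ X) ∧ (∑ i ∈ X, p i) ≤ m ∧
    ∀ j ∉ X, m < (∑ i ∈ X, p i) + p j}

def blockFace (blk : Fin d → Fin n) (β : ℝ) (X : Finset (Fin n)) :
    Set (EuclideanSpace ℝ (Fin d)) :=
  {z | ∀ j, z j ∈ if blk j ∈ X then Set.Icc (-β) β else {0}}

lemma mem_groupC_iff :
    w ∈ groupC d n blk p m ↔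
      ∑ i ∈ Finset.univ.filter (fun i => ∃ j, blk j = i ∧ w j ≠ 0), p i ≤ m := by
  rw [Finset.sum_filter]
  rfl

lemma mem_groupC_of_blkSupport_subset (hp : ∀ i, 0 ≤ p i) (hX : blkSupport blk w ⊆ X)
    (hXm : ∑ i ∈ X, p i ≤ m) : w ∈ groupC d n blk p m := by
  refine mem_groupC_iff.2 (le_trans ?_ hXm)
  exact Finset.sum_le_sum_of_subset_of_nonneg (fun _ hi => hX (Finset.mem_filter.1 hi).2)
    fun i _ _ => hp i

lemma sum_le_of_subset_blkSupport (hp : ∀ i, 0 ≤ p i) (hX : ↑X ⊆ blkSupport blk w)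
    (hw : w ∈ groupC d n blk p m) : ∑ i ∈ X, p i ≤ m := by
  refine le_trans ?_ (mem_groupC_iff.1 hw)
  exact Finset.sum_le_sum_of_subset_of_nonneg
    (fun i hi => Finset.mem_filter.2 ⟨Finset.mem_univ i, hX hi⟩) fun i _ _ => hp i

/-- An inclusion-maximal `X ⊇ I(w)` with `∑ i ∈ X, p i ≤ m` lies in `Y`. -/
lemma exists_mem_maximalBlockSets (hw : w ∈ groupC d n blk p m) :
    ∃ X, X ∈ maximalBlockSets blk p m w := by
  set F : Set (Finset (Fin n)) := {X | blkSupport blk w ⊆ X ∧ ∑ i ∈ X, p i ≤ m}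
  have hsupp : Finset.univ.filter (fun i => ∃ j, blk j = i ∧ w j ≠ 0) ∈ F :=
    ⟨fun i hi => Finset.mem_filter.2 ⟨Finset.mem_univ i, hi⟩, mem_groupC_iff.1 hw⟩
  obtain ⟨X, -, hXmax⟩ := F.toFinite.exists_le_maximal hsupp
  refine ⟨X, hXmax.prop.1, hXmax.prop.2, fun j hj => not_le.1 fun hle => hj ?_⟩
  have hins : insert j X ∈ F :=
    ⟨hXmax.prop.1.trans (by simp), by rwa [Finset.sum_insert hj, add_comm]⟩
  exact hXmax.eq_of_le hins (Finset.subset_insert j X) ▸ Finset.mem_insert_self j X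

lemma eventually_blkSupport_subset (w : EuclideanSpace ℝ (Fin d)) :
    ∀ᶠ z in 𝓝 w, blkSupport blk w ⊆ blkSupport blk z := by
  have : ∀ᶠ z in 𝓝 w, ∀ j, w j ≠ 0 → z j ≠ 0 := by
    refine eventually_all.2 fun j => ?_
    by_cases hj : w j = 0
    · exact Eventually.of_forall fun _ h => absurd hj h
    · exact ((PiLp.continuous_apply 2 _ j).continuousAt.eventually_ne hj).mono fun _ h _ => h
  exact this.mono fun z hz i ⟨j, hji, hwj⟩ => ⟨j, hji, hz j hwj⟩

lemma convex_blockFace : Convex ℝ (blockFace blk β X) := by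
  intro z₁ h₁ z₂ h₂ a b ha hb hab j
  have hconv : Convex ℝ (if blk j ∈ X then Set.Icc (-β) β else ({0} : Set ℝ)) := by
    split_ifs
    exacts [convex_Icc _ _, convex_singleton _]
  simpa using hconv (h₁ j) (h₂ j) ha hb hab

lemma blkSupport_subset_of_mem_blockFace {z : EuclideanSpace ℝ (Fin d)}
    (hz : z ∈ blockFace blk β X) : blkSupport blk z ⊆ X := by
  rintro i ⟨j, rfl, hzj⟩
  rw [Finset.mem_coe]
  by_contra hj
  have hzj' := hz j
  rw [if_neg hj] at hzj'
  exact hzj hzj'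

lemma blockFace_subset (hp : ∀ i, 0 ≤ p i) (hβ : 0 ≤ β) (hXm : ∑ i ∈ X, p i ≤ m) :
    blockFace blk β X ⊆ groupC d n blk p m ∩ Binf d β := by
  intro z hz
  refine ⟨mem_groupC_of_blkSupport_subset hp (blkSupport_subset_of_mem_blockFace hz) hXm,
    fun j => ?_⟩
  · have hzj := hz j
    split_ifs at hzj
    · exact abs_le.2 hzj
    · rw [Set.mem_singleton_iff.1 hzj, abs_zero]
      exact hβ

lemma mem_blockFace (hw : w ∈ Binf d β) (hX : blkSupport blk w ⊆ X) :
    w ∈ blockFace blk β X := by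
  intro j
  split_ifs with hj
  · exact abs_le.1 (hw j)
  · by_contra hwj
    exact hj (hX ⟨j, rfl, hwj⟩)

lemma forall_inner_sub_nonpos_blockFace_iff (hx : x ∈ blockFace blk β X) :
    (∀ z ∈ blockFace blk β X, ⟪y, z - x⟫_ℝ ≤ 0) ↔
      ∀ j, blk j ∈ X → ∀ b ∈ Set.Icc (-β) β, y j * (b - x j) ≤ 0 := by
  constructor
  · intro h j hj b hb
    have hz : x + EuclideanSpace.single j (b - x j) ∈ blockFace blk β X := by
      intro j'
      rcases eq_or_ne j' j with rfl | hj'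
      · simpa [hj] using hb
      · simpa [hj'] using hx j'
    simpa [EuclideanSpace.inner_single_right, mul_comm] using h _ hz
  · intro h z hz
    rw [PiLp.inner_apply]
    refine Finset.sum_nonpos fun j _ => ?_
    have hzj := hz j
    have hxj := hx j
    split_ifs at hzj hxj with hj
    · simpa [mul_comm] using h j hj _ hzj
    · simp [Set.mem_singleton_iff.1 hzj, Set.mem_singleton_iff.1 hxj]

/-- Near a point whose support is a set `X ∈ Y`, any point of `C ∩ B̄_β` has support
at least `X`, hence exactly `X` by maximality. -/
lemma eventually_mem_blockFace (hp : ∀ i, 0 ≤ p i)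
    (hXmax : ∀ j ∉ X, m < (∑ i ∈ X, p i) + p j) (hXx : ↑X ⊆ blkSupport blk x) :
    ∀ᶠ z in 𝓝 x, z ∈ groupC d n blk p m ∩ Binf d β → z ∈ blockFace blk β X := by
  filter_upwards [eventually_blkSupport_subset x] with z hxz ⟨hzC, hzB⟩
  have hzX : blkSupport blk z ⊆ X := by
    intro i hi
    by_contra hiX
    have hins : ↑(insert i X) ⊆ blkSupport blk z := by
      simpa [Set.insert_subset_iff] using ⟨hi, hXx.trans hxz⟩
    have := sum_le_of_subset_blkSupport hp hins hzC
    rw [Finset.sum_insert hiX, add_comm] at this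
    exact (hXmax i hiX).not_ge this
  intro j
  split_ifs with hj
  · exact abs_le.1 (hzB j)
  · by_contra hzj
    exact hj (hzX ⟨j, rfl, hzj⟩)

/-- Choose `X_k ∈ Y(x_k)`; some `X` occurs infinitely often, and along those indices the
normality of `y_k` to the convex face `blockFace blk β X ∋ x_k` passes to the limit. -/
lemma exists_maximalBlockSets_of_mem_mordNormalCone (hp : ∀ i, 0 ≤ p i) (hβ : 0 ≤ β)
    (hy : y ∈ mordNormalCone (groupC d n blk p m ∩ Binf d β) w) :
    ∃ X ∈ maximalBlockSets blk p m w, ∀ z ∈ blockFace blk β X, ⟪y, z - w⟫_ℝ ≤ 0 := by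
  obtain ⟨x, ys, hxS, hxw, hys, hfr⟩ := hy
  choose Xs hXs using fun k => exists_mem_maximalBlockSets (hxS k).1
  obtain ⟨X, hX⟩ : ∃ X, ∃ᶠ k in atTop, Xs k = X := by
    by_contra! h
    obtain ⟨k, hk⟩ := (eventually_all.2 h).exists
    exact hk (Xs k) rfl
  set l := atTop ⊓ 𝓟 {k | Xs k = X}
  have hl : l.NeBot := frequently_iff_neBot.1 hX
  have hXl : ∀ᶠ k in l, Xs k = X := eventually_inf_principal.2 (Eventually.of_forall fun _ => id)
  have hxl : Tendsto x l (𝓝 w) := hxw.mono_left inf_le_left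
  obtain ⟨k, rfl, hk⟩ := (hXl.and (hxl.eventually (eventually_blkSupport_subset w))).exists
  refine ⟨Xs k, ⟨fun i hi => (hXs k).1 i (hk hi), (hXs k).2.1, (hXs k).2.2⟩, ?_⟩
  refine forall_inner_sub_nonpos_of_tendsto hxl (hys.mono_left inf_le_left) ?_
  filter_upwards [hXl] with k' hk' z hz
  rw [← hk'] at hz
  exact inner_sub_nonpos_of_mem_frechetNormalCone convex_blockFace
    (blockFace_subset hp hβ (hXs k').2.1) (mem_blockFace (hxS k').2 (hXs k').1) (hfr k') hz

/-- Pushing the zero coordinates of `w` in the blocks of `X` to a small `t > 0` gives points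
of the face with support exactly `X` (every block is nonempty). -/
lemma exists_tendsto_blockFace (hblk : Function.Surjective blk) (hβ : 0 < β)
    (hw : w ∈ blockFace blk β X) :
    ∃ x : ℕ → EuclideanSpace ℝ (Fin d), Tendsto x atTop (𝓝 w) ∧ ∀ k,
      x k ∈ blockFace blk β X ∧ ↑X ⊆ blkSupport blk (x k) ∧
        ∀ j, x k j = w j ∨ (w j = 0 ∧ |x k j| < β) := by
  set e : EuclideanSpace ℝ (Fin d) :=
    WithLp.toLp 2 fun j => if w j = 0 ∧ blk j ∈ X then 1 else 0
  set t : ℕ → ℝ := fun k => β / 2 * (1 / (k + 1))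
  have ht : ∀ k, 0 < t k ∧ t k < β := fun k => by
    have hinv : 1 / ((k : ℝ) + 1) ≤ 1 := div_le_one_of_le₀ (by simp) (by positivity)
    simp only [t]
    constructor
    · positivity
    · nlinarith
  have hx : ∀ k j, (w + t k • e) j = if w j = 0 ∧ blk j ∈ X then t k else w j := fun k j => by
    by_cases h : w j = 0 ∧ blk j ∈ X <;> simp [e, h]
  refine ⟨fun k => w + t k • e, ?_, fun k => ⟨fun j => ?_, fun i hi => ?_, fun j => ?_⟩⟩
  · simpa [t] using (tendsto_const_nhds (x := w)).add
      ((tendsto_one_div_add_atTop_nhds_zero_nat.const_mul (β / 2)).smul_const e)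
  · rw [hx]
    by_cases h : w j = 0 ∧ blk j ∈ X
    · rw [if_pos h, if_pos h.2]
      exact ⟨by linarith [ht k], (ht k).2.le⟩
    · rw [if_neg h]
      exact hw j
  · obtain ⟨j, rfl⟩ := hblk i
    refine ⟨j, rfl, ?_⟩
    rw [hx]
    split_ifs with h
    · exact (ht k).1.ne'
    · exact fun hwj => h ⟨hwj, hi⟩
  · rw [hx]
    split_ifs with h
    · exact Or.inr ⟨h.1, by rw [abs_of_pos (ht k).1]; exact (ht k).2⟩
    · exact Or.inl rfl

lemma mem_mordNormalCone_of_mem_maximalBlockSets (hblk : Function.Surjective blk)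
    (hp : ∀ i, 0 ≤ p i) (hβ : 0 < β) (hw : w ∈ Binf d β) (hX : X ∈ maximalBlockSets blk p m w)
    (hy : ∀ i ∈ X, ∀ j, blk j = i →
      (w j = β → 0 ≤ y j) ∧ (|w j| < β → y j = 0) ∧ (w j = -β → y j ≤ 0)) :
    y ∈ mordNormalCone (groupC d n blk p m ∩ Binf d β) w := by
  obtain ⟨x, hxw, hx⟩ := exists_tendsto_blockFace hblk hβ (mem_blockFace hw hX.1)
  refine ⟨x, fun _ => y, fun k => blockFace_subset hp hβ.le hX.2.1 (hx k).1, hxw,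
    tendsto_const_nhds, fun k => ?_⟩
  obtain ⟨hxF, hXx, hxk⟩ := hx k
  have hnormal : ∀ z ∈ blockFace blk β X, ⟪y, z - x k⟫_ℝ ≤ 0 := by
    refine (forall_inner_sub_nonpos_blockFace_iff hxF).2 fun j hj => ?_
    have hxj : x k j ∈ Set.Icc (-β) β := by simpa [hj] using hxF j
    refine (forall_mul_sub_nonpos_iff hβ hxj).2 ?_
    rcases hxk j with heq | ⟨hwj, -⟩
    · rw [heq]
      exact hy _ hj j rfl
    · have hyj : y j = 0 := (hy _ hj j rfl).2.1 (by rwa [hwj, abs_zero])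
      simp [hyj]
  apply mem_frechetNormalCone_of_eventually_inner_sub_nonpos
  filter_upwards [eventually_mem_blockFace hp hX.2.2 hXx] with z hz hzS
  exact hnormal z (hz hzS)

end Blocks

theorem mordukhovich_normal_cone_C_inter_ball_general
    (d n : ℕ) (blk : Fin d → Fin n) (hblk : Function.Surjective blk)
    (p : Fin n → ℝ) (hp : ∀ i, 0 < p i) (m : ℝ)
    (β : ℝ) (hβ : 0 < β)
    (w : EuclideanSpace ℝ (Fin d)) (hw : w ∈ groupC d n blk p m ∩ Binf d β) :
    mordNormalCone (groupC d n blk p m ∩ Binf d β) w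
      = {y : EuclideanSpace ℝ (Fin d) |
          ∃ X : Finset (Fin n),
            (∀ i ∈ blkSupport blk w, i ∈ X) ∧
            (∑ i ∈ X, p i) ≤ m ∧
            (∀ j ∉ X, m < (∑ i ∈ X, p i) + p j) ∧
            ∀ i ∈ X, ∀ j : Fin d, blk j = i →
              (w j = β → 0 ≤ y j) ∧ (|w j| < β → y j = 0) ∧ (w j = -β → y j ≤ 0)} := by
  have hp' : ∀ i, 0 ≤ p i := fun i => (hp i).le
  ext y
  constructor
  · intro hy
    obtain ⟨X, ⟨hwX, hXm, hXmax⟩, hnormal⟩ :=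
      exists_maximalBlockSets_of_mem_mordNormalCone hp' hβ.le hy
    refine ⟨X, hwX, hXm, hXmax, fun i hi j hji => ?_⟩
    subst hji
    have hface := (forall_inner_sub_nonpos_blockFace_iff (mem_blockFace hw.2 hwX)).1 hnormal j hi
    exact (forall_mul_sub_nonpos_iff hβ (abs_le.1 (hw.2 j))).1 hface
  · rintro ⟨X, hwX, hXm, hXmax, hsign⟩
    exact mem_mordNormalCone_of_mem_maximalBlockSets hblk hp' hβ hw.2 ⟨hwX, hXm, hXmax⟩ hsign

/-- For any `w ∈ C ∩ B̄_β`, the Mordukhovich normal cone satisfies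
`N(w, C ∩ B̄_β) = {y : ∃ X ∈ Y, ∀ i ∈ X, ∀ j ∈ block i, y^i_j ≥ 0 if w^i_j = β,
y^i_j = 0 if |w^i_j| < β, and y^i_j ≤ 0 if w^i_j = −β}`, where `Y` is the collection of index
sets `X ⊇ I(w)` with `Σ_{i∈X} p_i ≤ m` and `Σ_{i∈X} p_i + p_j > m` for all `j ∉ X`. -/
theorem mordukhovich_normal_cone_C_inter_ball
    (d n : ℕ) (blk : Fin d → Fin n) (hblk : Function.Surjective blk)
    (p : Fin n → ℝ) (hp : ∀ i, 0 < p i) (m : ℝ) (hm : 0 < m)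
    (β : ℝ) (hβ : 0 < β)
    (w : EuclideanSpace ℝ (Fin d)) (hw : w ∈ groupC d n blk p m ∩ Binf d β) :
    mordNormalCone (groupC d n blk p m ∩ Binf d β) w
      = {y : EuclideanSpace ℝ (Fin d) |
          ∃ X : Finset (Fin n),
            (∀ i ∈ blkSupport blk w, i ∈ X) ∧
            (∑ i ∈ X, p i) ≤ m ∧
            (∀ j ∉ X, m < (∑ i ∈ X, p i) + p j) ∧
            ∀ i ∈ X, ∀ j : Fin d, blk j = i →
              (w j = β → 0 ≤ y j) ∧ (|w j| < β → y j = 0) ∧ (w j = -β → y j ≤ 0)} :=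
  mordukhovich_normal_cone_C_inter_ball_general d n blk hblk p hp m β hβ w hw
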